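/- arXiv:2503.13686 — 5 statements merged into one kernel-verified Lean document; each statement's English description precedes it below -/
import Mathlib

section
/- Let α ∈ ℝ \ {2} and κ > 0. For any differentiable, strictly decreasing probability density f to which the down transformation applies, the down transformation commutes with rescaling according to D_α[f^[κ]](s) = κ^{α-2} · D_α[f](κ^{α-2} s), i.e. D_α[f^[κ]] = (D_α[f])^[κ^{α-2}]. For α = 2 one instead has D_2[f^[κ]](s) = D_2[f](s + ln κ). -/
/-! Under `f ↦ κ f(κ ·)` the value `f(κx)` picks up a factor `κ` and the derivative a factor
`κ²`, so `f^α/|f'|` is multiplied by `κ^(α-2)`, while `s = f^(2-α)/(α-2)` is multiplied by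
`κ^(2-α)` (and `s = -log f` is shifted by `-log κ`). -/

open MeasureTheory Real Set Filter Bornology

/-- The canonical change of variable `s(x)` of the down transformation:
`s(x) = f(x)^(2-α)/(α-2)` for `α ≠ 2` and `s(x) = -log f(x)` for `α = 2`. -/
noncomputable def sChange (α : ℝ) (f : ℝ → ℝ) (x : ℝ) : ℝ :=
  if α = 2 then -Real.log (f x) else f x ^ (2 - α) / (α - 2)

/-- The value of the down transformation at the point `s(x)`:
`D_α[f](s(x)) = f(x)^α |f'(x)|⁻¹`. -/
noncomputable def downAt (α : ℝ) (f : ℝ → ℝ) (x : ℝ) : ℝ :=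
  f x ^ α / |deriv f x|

/-- `g` is the down-`α`-transform of `f`, where `I` is the domain of `f`. -/
def IsDownTransform (α : ℝ) (f g : ℝ → ℝ) (I : Set ℝ) : Prop :=
  ∀ x ∈ I, g (sChange α f x) = downAt α f x

/-- The derivative `u'(x) = -|(α-2)x|^(1/(α-2)) f(x)` (resp. `-eˣ f(x)` for `α = 2`)
of the change of variable of the up transformation. -/
noncomputable def upDeriv (α : ℝ) (f : ℝ → ℝ) (x : ℝ) : ℝ :=
  -((if α = 2 then Real.exp x else |(α - 2) * x| ^ (α - 2)⁻¹) * f x)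

/-- The value of the up transformation at the point `u(x)`:
`U_α[f](u(x)) = |(α-2)x|^(1/(2-α))` (resp. `e^(-x)` for `α = 2`). -/
noncomputable def upPoint (α : ℝ) (x : ℝ) : ℝ :=
  if α = 2 then Real.exp (-x) else |(α - 2) * x| ^ (2 - α)⁻¹

/-- `g` is an up-`α`-transform of `f` (the primitive `u` being defined up to translation),
where `I` is the domain of `f`. -/
def IsUpTransform (α : ℝ) (f g : ℝ → ℝ) (I : Set ℝ) : Prop :=
  ∃ u : ℝ → ℝ, (∀ x ∈ I, HasDerivAt u (upDeriv α f x) x) ∧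
    ∀ x ∈ I, g (u x) = upPoint α x

/-- The canonical primitive of the up change of variable, with reference point `x₀`:
`u(x) = ∫_x^{x₀} |(α-2)t|^(1/(α-2)) f(t) dt` (resp. with `eᵗ` for `α = 2`). -/
noncomputable def upPrim (α x₀ : ℝ) (f : ℝ → ℝ) (x : ℝ) : ℝ :=
  ∫ t in x..x₀, (if α = 2 then Real.exp t else |(α - 2) * t| ^ (α - 2)⁻¹) * f t

/-- `f` is a probability density supported on `I`. -/
structure IsDensityOn (f : ℝ → ℝ) (I : Set ℝ) : Prop where
  pos : ∀ x ∈ I, 0 < f x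
  zero : ∀ x ∉ I, f x = 0
  normalized : (∫ x in I, f x) = 1

/-- `f` is differentiable with `f' < 0` on `I`. -/
def IsSmoothDecOn (f : ℝ → ℝ) (I : Set ℝ) : Prop :=
  (∀ x ∈ I, DifferentiableAt ℝ f x) ∧ (∀ x ∈ I, deriv f x < 0)

/-- Where `f` is not differentiable at `κ x`, both sides are the junk value `0`. -/
theorem deriv_rescale (κ : ℝ) (f : ℝ → ℝ) (x : ℝ) :
    deriv (fun y => κ * f (κ * y)) x = κ * (κ * deriv f (κ * x)) := by
  rw [deriv_const_mul_field, deriv_comp_mul_left, smul_eq_mul]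

theorem downAt_rescale (α : ℝ) {κ : ℝ} (hκ : 0 < κ) {f : ℝ → ℝ} {x : ℝ}
    (hfx : 0 ≤ f (κ * x)) :
    downAt α (fun y => κ * f (κ * y)) x = κ ^ (α - 2) * downAt α f (κ * x) := by
  have hκα : κ ^ α = κ ^ (α - 2) * (κ * κ) := by
    rw [← sq, ← rpow_two, ← rpow_add hκ, sub_add_cancel]
  simp only [downAt]
  rw [deriv_rescale, abs_mul, abs_mul, abs_of_pos hκ, mul_rpow hκ.le hfx, hκα]
  field_simp

theorem sChange_rescale_of_ne_two {α : ℝ} (hα : α ≠ 2) {κ : ℝ} (hκ : 0 < κ) {f : ℝ → ℝ}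
    {x : ℝ} (hfx : 0 ≤ f (κ * x)) :
    κ ^ (α - 2) * sChange α (fun y => κ * f (κ * y)) x = sChange α f (κ * x) := by
  have hκ_inv : κ ^ (α - 2) * κ ^ (2 - α) = 1 := by
    rw [← rpow_add hκ, sub_add_sub_cancel, sub_self, rpow_zero]
  simp only [sChange, if_neg hα]
  rw [mul_rpow hκ.le hfx, mul_div_assoc, ← mul_assoc, hκ_inv, one_mul]

theorem sChange_two_rescale {κ : ℝ} (hκ : 0 < κ) {f : ℝ → ℝ} {x : ℝ} (hfx : f (κ * x) ≠ 0) :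
    sChange 2 (fun y => κ * f (κ * y)) x + log κ = sChange 2 f (κ * x) := by
  simp only [sChange, if_true]
  rw [log_mul hκ.ne' hfx]
  ring

theorem mul_mem_Ioo_of_mem_Ioo_div {a b κ y : ℝ} (hκ : 0 < κ) (hy : y ∈ Ioo (a / κ) (b / κ)) :
    κ * y ∈ Ioo a b :=
  ⟨(div_lt_iff₀' hκ).1 hy.1, (lt_div_iff₀' hκ).1 hy.2⟩

theorem down_transform_scaling_general
    (α κ xi xf : ℝ) (hκ : 0 < κ) (f g gk : ℝ → ℝ)
    (hf : IsDensityOn f (Set.Ioo xi xf))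
    (hg : IsDownTransform α f g (Set.Ioo xi xf))
    (hgk : IsDownTransform α (fun y => κ * f (κ * y)) gk (Set.Ioo (xi / κ) (xf / κ))) :
    (α ≠ 2 → ∀ s ∈ sChange α (fun y => κ * f (κ * y)) '' Set.Ioo (xi / κ) (xf / κ),
      gk s = κ ^ (α - 2) * g (κ ^ (α - 2) * s)) ∧
    (α = 2 → ∀ s ∈ sChange 2 (fun y => κ * f (κ * y)) '' Set.Ioo (xi / κ) (xf / κ),
      gk s = g (s + Real.log κ)) := by
  refine ⟨fun hα => ?_, fun hα => ?_⟩
  · rintro _ ⟨y, hy, rfl⟩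
    have hκy := mul_mem_Ioo_of_mem_Ioo_div hκ hy
    have hfy := (hf.pos _ hκy).le
    rw [hgk y hy, downAt_rescale α hκ hfy, sChange_rescale_of_ne_two hα hκ hfy, hg _ hκy]
  · subst hα
    rintro _ ⟨y, hy, rfl⟩
    have hκy := mul_mem_Ioo_of_mem_Ioo_div hκ hy
    rw [hgk y hy, downAt_rescale 2 hκ (hf.pos _ hκy).le, sub_self, rpow_zero, one_mul,
      sChange_two_rescale hκ (hf.pos _ hκy).ne', hg _ hκy]

/-- the down transformation versus rescaling `f^[κ](x) = κ f(κx)`. -/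
theorem down_transform_scaling
    (α κ xi xf : ℝ) (hκ : 0 < κ) (f g gk : ℝ → ℝ)
    (hf : IsDensityOn f (Set.Ioo xi xf))
    (hmon : IsSmoothDecOn f (Set.Ioo xi xf))
    (hg : IsDownTransform α f g (Set.Ioo xi xf))
    (hgk : IsDownTransform α (fun y => κ * f (κ * y)) gk (Set.Ioo (xi / κ) (xf / κ))) :
    (α ≠ 2 → ∀ s ∈ sChange α (fun y => κ * f (κ * y)) '' Set.Ioo (xi / κ) (xf / κ),
      gk s = κ ^ (α - 2) * g (κ ^ (α - 2) * s)) ∧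
    (α = 2 → ∀ s ∈ sChange 2 (fun y => κ * f (κ * y)) '' Set.Ioo (xi / κ) (xf / κ),
      gk s = g (s + Real.log κ)) :=
  down_transform_scaling_general α κ xi xf hκ f g gk hf hg hgk
end

section
/- Let α ∈ ℝ \ {2} and κ > 0. For any probability density f, the up transformation commutes with rescaling according to U_α[f^[κ]] = (U_α[f])^[κ^{1/(α-2)}], i.e. U_α[f^[κ]](u) = κ^{1/(α-2)} · U_α[f](κ^{1/(α-2)} u). -/
open MeasureTheory Real Set Filter Bornology

/-!
For `α ≠ 2` the weight `|(α-2)t|^(1/(α-2))` of the up change of variable and the value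
`|(α-2)x|^(1/(2-α))` of the transform are homogeneous of opposite degrees `±1/(α-2)` in the
space variable. Substituting `s = κt` in the primitive of `f^[κ]` therefore gives
`u_κ(x) = κ^(1/(2-α)) u(κx)`, while `U_α(κx) = κ^(1/(2-α)) U_α(x)`; the two factors cancel
against the rescaling factor `κ^(1/(α-2))`.
-/

lemma abs_mul_mul_rpow {κ : ℝ} (hκ : 0 ≤ κ) (a t p : ℝ) :
    |a * (κ * t)| ^ p = κ ^ p * |a * t| ^ p := by
  rw [mul_left_comm, abs_mul, abs_of_nonneg hκ, mul_rpow hκ (abs_nonneg _)]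

lemma inv_two_sub_eq_neg_inv_sub_two (α : ℝ) : (2 - α)⁻¹ = -(α - 2)⁻¹ := by
  rw [← neg_sub, inv_neg]

lemma upPoint_mul {α κ : ℝ} (hα : α ≠ 2) (hκ : 0 ≤ κ) (x : ℝ) :
    upPoint α (κ * x) = κ ^ (2 - α)⁻¹ * upPoint α x := by
  simp only [upPoint, if_neg hα, abs_mul_mul_rpow hκ]

lemma upPrim_rescale {α κ : ℝ} (hα : α ≠ 2) (hκ : 0 < κ) (x₀ : ℝ) (f : ℝ → ℝ) (x : ℝ) :
    upPrim α (x₀ / κ) (fun y => κ * f (κ * y)) x = κ ^ (2 - α)⁻¹ * upPrim α x₀ f (κ * x) := by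
  set p := (α - 2)⁻¹
  have hweight : ∀ t, |(α - 2) * t| ^ p = κ ^ (2 - α)⁻¹ * |(α - 2) * (κ * t)| ^ p := by
    intro t
    rw [abs_mul_mul_rpow hκ.le, ← mul_assoc, inv_two_sub_eq_neg_inv_sub_two, ← rpow_add hκ,
      neg_add_cancel, rpow_zero, one_mul]
  simp only [upPrim, if_neg hα]
  calc ∫ t in x..x₀ / κ, |(α - 2) * t| ^ p * (κ * f (κ * t))
      = κ * κ ^ (2 - α)⁻¹ * ∫ t in x..x₀ / κ, |(α - 2) * (κ * t)| ^ p * f (κ * t) := by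
        rw [← intervalIntegral.integral_const_mul]
        exact intervalIntegral.integral_congr fun t _ => by rw [hweight t]; ring
    _ = κ ^ (2 - α)⁻¹ * ∫ s in κ * x..x₀, |(α - 2) * s| ^ p * f s := by
        rw [intervalIntegral.integral_comp_mul_left (fun s => |(α - 2) * s| ^ p * f s) hκ.ne',
          mul_div_cancel₀ _ hκ.ne', smul_eq_mul]
        field_simp

theorem up_transform_scaling_general
    (α κ xi xf x₀ : ℝ) (hα : α ≠ 2) (hκ : 0 < κ)
    (f g₁ g₂ : ℝ → ℝ)
    (hg₂ : ∀ x ∈ Set.Ioo xi xf, g₂ (upPrim α x₀ f x) = upPoint α x)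
    (hg₁ : ∀ x ∈ Set.Ioo (xi / κ) (xf / κ),
      g₁ (upPrim α (x₀ / κ) (fun y => κ * f (κ * y)) x) = upPoint α x) :
    ∀ x ∈ Set.Ioo (xi / κ) (xf / κ),
      g₁ (upPrim α (x₀ / κ) (fun y => κ * f (κ * y)) x)
        = κ ^ (α - 2)⁻¹ *
          g₂ (κ ^ (α - 2)⁻¹ * upPrim α (x₀ / κ) (fun y => κ * f (κ * y)) x) := by
  intro x hx
  have hκx : κ * x ∈ Set.Ioo xi xf :=
    ⟨by rw [mul_comm]; exact (div_lt_iff₀ hκ).mp hx.1,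
      by rw [mul_comm]; exact (lt_div_iff₀ hκ).mp hx.2⟩
  have hcancel : κ ^ (α - 2)⁻¹ * κ ^ (2 - α)⁻¹ = 1 := by
    rw [← rpow_add hκ, inv_two_sub_eq_neg_inv_sub_two, add_neg_cancel, rpow_zero]
  rw [hg₁ x hx, upPrim_rescale hα hκ, ← mul_assoc, hcancel, one_mul, hg₂ _ hκx,
    upPoint_mul hα hκ.le, ← mul_assoc, hcancel, one_mul]

/-- the up transformation versus rescaling `f^[κ](x) = κ f(κx)`:
`U_α[f^[κ]](u) = κ^(1/(α-2)) U_α[f](κ^(1/(α-2)) u)`. -/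
theorem up_transform_scaling
    (α κ xi xf x₀ : ℝ) (hα : α ≠ 2) (hκ : 0 < κ) (hx₀ : x₀ ∈ Set.Ioo xi xf)
    (f g₁ g₂ : ℝ → ℝ)
    (hf : IsDensityOn f (Set.Ioo xi xf))
    (hg₂ : ∀ x ∈ Set.Ioo xi xf, g₂ (upPrim α x₀ f x) = upPoint α x)
    (hg₁ : ∀ x ∈ Set.Ioo (xi / κ) (xf / κ),
      g₁ (upPrim α (x₀ / κ) (fun y => κ * f (κ * y)) x) = upPoint α x) :
    ∀ x ∈ Set.Ioo (xi / κ) (xf / κ),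
      g₁ (upPrim α (x₀ / κ) (fun y => κ * f (κ * y)) x)
        = κ ^ (α - 2)⁻¹ *
          g₂ (κ ^ (α - 2)⁻¹ * upPrim α (x₀ / κ) (fun y => κ * f (κ * y)) x) :=
  up_transform_scaling_general α κ xi xf x₀ hα hκ f g₁ g₂ hg₂ hg₁
end

section
/- Let f be a differentiable, strictly decreasing probability density and α ∈ ℝ \ {2}. Then for every p > 0 such that the quantities are well defined, σ_p[D_α[f]] = N_{1+(2-α)p}[f]^{α-2} / |2-α|; equivalently, for λ ≠ 1, N_λ[U_α[f]] = (|2-α| · σ_{(λ-1)/(2-α)}[f])^{1/(α-2)}. -/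
/-!
Both identities are one substitution each. For `s = f^(2-α)/(α-2)` we have
`ds = -f' f^(1-α) dx`, and the factor `|f'|⁻¹` of `D_α[f]` cancels this Jacobian, so that
`|s|^p D_α[f](s) ds = |α-2|^(-p) f^(1+(2-α)p) dx`. Likewise `|du| = |(α-2)x|^(1/(α-2)) f dx`
and `U_α[f](u)^λ = |(α-2)x|^(λ/(2-α))` multiply to `|α-2|^e |x|^e f dx` with
`e = (λ-1)/(2-α)`. Both substitutions are injective: `s' > 0`, while `u' ≤ 0` vanishes only at `0`.
-/

open MeasureTheory Real Set Filter Bornology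

lemma strictAntiOn_of_hasDerivAt_nonpos_of_ne_zero {D : Set ℝ} (hD : Convex ℝ D)
    {f f' : ℝ → ℝ} (c : ℝ) (hf : ∀ x ∈ D, HasDerivAt f (f' x) x)
    (hf'₀ : ∀ x ∈ D, f' x ≤ 0) (hf'c : ∀ x ∈ D, x ≠ c → f' x ≠ 0) : StrictAntiOn f D := by
  have hanti : AntitoneOn f D :=
    antitoneOn_of_hasDerivWithinAt_nonpos hD
      (fun x hx => (hf x hx).continuousAt.continuousWithinAt)
      (fun x hx => (hf x (interior_subset hx)).hasDerivWithinAt)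
      (fun x hx => hf'₀ x (interior_subset hx))
  intro a ha b hb hab
  refine lt_of_le_of_ne (hanti ha hb hab.le) fun hfab => ?_
  obtain ⟨z, hz, hzc⟩ : (Ioo a b \ {c}).Nonempty :=
    ((Set.Ioo_infinite hab).sdiff (Set.finite_singleton c)).nonempty
  have hsub : Ioo a b ⊆ D := Ioo_subset_Icc_self.trans (hD.ordConnected.out ha hb)
  have hconst : f =ᶠ[nhds z] fun _ => f a := by
    filter_upwards [Ioo_mem_nhds hz.1 hz.2] with y hy
    exact le_antisymm (hanti ha (hsub hy) hy.1.le) (hfab ▸ hanti (hsub hy) hb hy.2.le)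
  exact hf'c z (hsub hz) hzc
    ((hf z (hsub hz)).unique ((hasDerivAt_const z (f a)).congr_of_eventuallyEq hconst))

section Down

variable {α : ℝ} {f : ℝ → ℝ} {x : ℝ}

lemma hasDerivAt_sChange (hα : α ≠ 2) (hfx : 0 < f x) (hdf : DifferentiableAt ℝ f x) :
    HasDerivAt (sChange α f) (-deriv f x * f x ^ (1 - α)) x := by
  have hs : sChange α f = fun y => f y ^ (2 - α) / (α - 2) := by
    funext y; simp [sChange, hα]
  rw [hs]
  refine ((hdf.hasDerivAt.rpow_const (Or.inl hfx.ne')).div_const (α - 2)).congr_deriv ?_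
  rw [show 2 - α - 1 = 1 - α by ring]
  field_simp [sub_ne_zero.mpr hα]
  ring

lemma strictMonoOn_sChange (hα : α ≠ 2) {I : Set ℝ} (hI : Convex ℝ I)
    (hpos : ∀ x ∈ I, 0 < f x) (hmon : IsSmoothDecOn f I) : StrictMonoOn (sChange α f) I :=
  strictMonoOn_of_hasDerivWithinAt_pos hI
    (fun x hx => (hasDerivAt_sChange hα (hpos x hx) (hmon.1 x hx)).continuousAt.continuousWithinAt)
    (fun x hx => (hasDerivAt_sChange hα (hpos x (interior_subset hx))
      (hmon.1 x (interior_subset hx))).hasDerivWithinAt)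
    (fun x hx => mul_pos (neg_pos.mpr (hmon.2 x (interior_subset hx)))
      (rpow_pos_of_pos (hpos x (interior_subset hx)) _))

lemma abs_deriv_sChange_mul_downAt (hα : α ≠ 2) (p : ℝ) (hfx : 0 < f x) (hdf : deriv f x ≠ 0) :
    |-deriv f x * f x ^ (1 - α)| * (|sChange α f x| ^ p * downAt α f x)
      = f x ^ (1 + (2 - α) * p) / |α - 2| ^ p := by
  have hexp : f x ^ (1 - α) * f x ^ ((2 - α) * p) * f x ^ α = f x ^ (1 + (2 - α) * p) := by
    rw [← rpow_add hfx, ← rpow_add hfx]; ring_nf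
  simp only [sChange, downAt, if_neg hα]
  rw [abs_mul, abs_neg, abs_of_pos (rpow_pos_of_pos hfx _), abs_div,
    abs_of_pos (rpow_pos_of_pos hfx _), div_rpow (rpow_pos_of_pos hfx _).le (abs_nonneg _),
    ← rpow_mul hfx.le, ← hexp]
  field_simp [abs_ne_zero.mpr hdf]

theorem setIntegral_image_sChange_rpow_abs_mul (hα : α ≠ 2) (p : ℝ) {g : ℝ → ℝ} {I : Set ℝ}
    (hI : Convex ℝ I) (hpos : ∀ x ∈ I, 0 < f x) (hmon : IsSmoothDecOn f I)
    (hg : IsDownTransform α f g I) :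
    ∫ s in sChange α f '' I, |s| ^ p * g s = (∫ x in I, f x ^ (1 + (2 - α) * p)) / |α - 2| ^ p := by
  have hmeas : MeasurableSet I := hI.ordConnected.measurableSet
  rw [integral_image_eq_integral_abs_deriv_smul hmeas
    (fun x hx => (hasDerivAt_sChange hα (hpos x hx) (hmon.1 x hx)).hasDerivWithinAt)
    (strictMonoOn_sChange hα hI hpos hmon).injOn, ← integral_div]
  refine setIntegral_congr_fun hmeas fun x hx => ?_
  rw [smul_eq_mul, hg x hx, abs_deriv_sChange_mul_downAt hα p (hpos x hx) (hmon.2 x hx).ne]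

end Down

section Up

variable {α : ℝ} {f : ℝ → ℝ} {x : ℝ}

lemma upDeriv_nonpos (hfx : 0 ≤ f x) : upDeriv α f x ≤ 0 := by
  unfold upDeriv
  split_ifs <;> exact neg_nonpos.mpr (mul_nonneg (by positivity) hfx)

lemma upDeriv_ne_zero (hα : α ≠ 2) (hfx : 0 < f x) (hx : x ≠ 0) : upDeriv α f x ≠ 0 := by
  simp only [upDeriv, if_neg hα, neg_ne_zero]
  exact (mul_pos (rpow_pos_of_pos (abs_pos.mpr (mul_ne_zero (sub_ne_zero.mpr hα) hx)) _) hfx).ne'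

lemma abs_upDeriv_mul_upPoint_rpow (hα : α ≠ 2) (lam : ℝ) (hfx : 0 < f x) (hx : x ≠ 0) :
    |upDeriv α f x| * upPoint α x ^ lam
      = |α - 2| ^ ((lam - 1) / (2 - α)) * (|x| ^ ((lam - 1) / (2 - α)) * f x) := by
  have hα2 : α - 2 ≠ 0 := sub_ne_zero.mpr hα
  have habs : 0 < |(α - 2) * x| := abs_pos.mpr (mul_ne_zero hα2 hx)
  have hexp : (α - 2)⁻¹ + (2 - α)⁻¹ * lam = (lam - 1) / (2 - α) := by
    field_simp [sub_ne_zero.mpr hα.symm]; ring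
  simp only [upDeriv, upPoint, if_neg hα]
  rw [abs_neg, abs_mul, abs_of_pos (rpow_pos_of_pos habs _), abs_of_pos hfx,
    ← rpow_mul habs.le, mul_right_comm, ← rpow_add habs, hexp, abs_mul,
    mul_rpow (abs_nonneg _) (abs_nonneg _), mul_assoc]

lemma strictAntiOn_of_hasDerivAt_upDeriv (hα : α ≠ 2) {u : ℝ → ℝ} {I : Set ℝ}
    (hI : Convex ℝ I) (hpos : ∀ x ∈ I, 0 < f x) (hu : ∀ x ∈ I, HasDerivAt u (upDeriv α f x) x) :
    StrictAntiOn u I :=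
  strictAntiOn_of_hasDerivAt_nonpos_of_ne_zero hI 0 hu
    (fun x hx => upDeriv_nonpos (hpos x hx).le) (fun x hx => upDeriv_ne_zero hα (hpos x hx))

theorem setIntegral_image_upTransform_rpow (hα : α ≠ 2) (lam : ℝ) {u h : ℝ → ℝ} {I : Set ℝ}
    (hI : Convex ℝ I) (hpos : ∀ x ∈ I, 0 < f x) (hu : ∀ x ∈ I, HasDerivAt u (upDeriv α f x) x)
    (hh : ∀ x ∈ I, h (u x) = upPoint α x) :
    ∫ v in u '' I, h v ^ lam
      = |α - 2| ^ ((lam - 1) / (2 - α)) * ∫ x in I, |x| ^ ((lam - 1) / (2 - α)) * f x := by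
  have hmeas : MeasurableSet I := hI.ordConnected.measurableSet
  rw [integral_image_eq_integral_abs_deriv_smul hmeas (fun x hx => (hu x hx).hasDerivWithinAt)
    (strictAntiOn_of_hasDerivAt_upDeriv hα hI hpos hu).injOn, ← integral_const_mul]
  refine setIntegral_congr_ae hmeas ?_
  filter_upwards [Measure.ae_ne volume 0] with x hx0 hx
  rw [smul_eq_mul, hh x hx, abs_upDeriv_mul_upPoint_rpow hα lam (hpos x hx) hx0]

end Up

/-- `σ_p` of a density supported on `S`. -/
noncomputable def typicalDeviation (p : ℝ) (S : Set ℝ) (g : ℝ → ℝ) : ℝ :=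
  (∫ s in S, |s| ^ p * g s) ^ (1 / p)

/-- `N_λ` of a density supported on `S`. -/
noncomputable def entropyPower (lam : ℝ) (S : Set ℝ) (f : ℝ → ℝ) : ℝ :=
  (∫ x in S, f x ^ lam) ^ (1 / (1 - lam))

section Main

variable {α : ℝ} {f : ℝ → ℝ} {I : Set ℝ}

theorem typicalDeviation_downTransform (hα : α ≠ 2) {p : ℝ} (hp : p ≠ 0) {g : ℝ → ℝ}
    (hI : Convex ℝ I) (hpos : ∀ x ∈ I, 0 < f x) (hmon : IsSmoothDecOn f I)
    (hg : IsDownTransform α f g I) :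
    typicalDeviation p (sChange α f '' I) g
      = entropyPower (1 + (2 - α) * p) I f ^ (α - 2) / |2 - α| := by
  have hA : 0 < |α - 2| := abs_pos.mpr (sub_ne_zero.mpr hα)
  have hB : 0 ≤ ∫ x in I, f x ^ (1 + (2 - α) * p) :=
    setIntegral_nonneg hI.ordConnected.measurableSet fun x hx => (rpow_pos_of_pos (hpos x hx) _).le
  rw [typicalDeviation, entropyPower, setIntegral_image_sChange_rpow_abs_mul hα p hI hpos hmon hg,
    div_rpow hB (rpow_nonneg hA.le _), ← rpow_mul hA.le, mul_one_div_cancel hp, rpow_one,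
    ← rpow_mul hB, abs_sub_comm]
  congr 2
  field_simp [sub_ne_zero.mpr hα]
  ring

theorem entropyPower_upTransform (hα : α ≠ 2) {lam : ℝ} (hlam : lam ≠ 1) {u h : ℝ → ℝ}
    (hI : Convex ℝ I) (hpos : ∀ x ∈ I, 0 < f x) (hu : ∀ x ∈ I, HasDerivAt u (upDeriv α f x) x)
    (hh : ∀ x ∈ I, h (u x) = upPoint α x) :
    entropyPower lam (u '' I) h
      = (|2 - α| * typicalDeviation ((lam - 1) / (2 - α)) I f) ^ (α - 2)⁻¹ := by
  have hA : 0 < |α - 2| := abs_pos.mpr (sub_ne_zero.mpr hα)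
  have hM : 0 ≤ ∫ x in I, |x| ^ ((lam - 1) / (2 - α)) * f x :=
    setIntegral_nonneg hI.ordConnected.measurableSet fun x hx =>
      mul_nonneg (rpow_nonneg (abs_nonneg _) _) (hpos x hx).le
  rw [typicalDeviation, entropyPower, setIntegral_image_upTransform_rpow hα lam hI hpos hu hh,
    abs_sub_comm 2 α, mul_rpow (rpow_nonneg hA.le _) hM, mul_rpow hA.le (rpow_nonneg hM _),
    ← rpow_mul hA.le, ← rpow_mul hM]
  have h2α : 2 - α ≠ 0 := sub_ne_zero.mpr hα.symm
  have hl : lam - 1 ≠ 0 := sub_ne_zero.mpr hlam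
  have hl' : 1 - lam ≠ 0 := sub_ne_zero.mpr hlam.symm
  congr 2 <;> field_simp <;> ring

end Main

theorem down_moment_is_entropy_power_general
    (α xi xf : ℝ) (hα : α ≠ 2) (I : Set ℝ) (hI : I = Set.Ioo xi xf)
    (f g u h : ℝ → ℝ)
    (hf : IsDensityOn f I) (hmon : IsSmoothDecOn f I)
    (hg : IsDownTransform α f g I)
    (hu : ∀ x ∈ I, HasDerivAt u (upDeriv α f x) x)
    (hh : ∀ x ∈ I, h (u x) = upPoint α x)
    (p lam : ℝ) (hp : 0 < p) (hlam : lam ≠ 1) :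
    (∫ s in sChange α f '' I, |s| ^ p * g s) ^ (1 / p)
      = ((∫ x in I, f x ^ (1 + (2 - α) * p)) ^ (1 / (1 - (1 + (2 - α) * p)))) ^ (α - 2)
        / |2 - α| ∧
    (∫ v in u '' I, h v ^ lam) ^ (1 / (1 - lam))
      = (|2 - α| *
          (∫ x in I, |x| ^ ((lam - 1) / (2 - α)) * f x) ^ ((2 - α) / (lam - 1)))
        ^ (α - 2)⁻¹ := by
  have hconv : Convex ℝ I := hI ▸ convex_Ioo xi xf
  refine ⟨typicalDeviation_downTransform hα hp.ne' hconv hf.pos hmon hg, ?_⟩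
  rw [← one_div_div (lam - 1)]
  exact entropyPower_upTransform hα hlam hconv hf.pos hu hh

/-- the `p`-typical deviation of the down transform is the Rényi entropy
power of the original density, `σ_p[D_α f] = N_{1+(2-α)p}[f]^(α-2)/|2-α|`; equivalently
`N_λ[U_α f] = (|2-α| σ_{(λ-1)/(2-α)}[f])^(1/(α-2))`. -/
theorem down_moment_is_entropy_power
    (α xi xf : ℝ) (hα : α ≠ 2) (I : Set ℝ) (hI : I = Set.Ioo xi xf)
    (f g u h : ℝ → ℝ)
    (hf : IsDensityOn f I) (hmon : IsSmoothDecOn f I)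
    (hg : IsDownTransform α f g I)
    (hu : ∀ x ∈ I, HasDerivAt u (upDeriv α f x) x)
    (hh : ∀ x ∈ I, h (u x) = upPoint α x)
    (p lam : ℝ) (hp : 0 < p) (hlam : lam ≠ 1)
    (hint1 : MeasureTheory.IntegrableOn (fun s => |s| ^ p * g s) (sChange α f '' I))
    (hint2 : MeasureTheory.IntegrableOn (fun x => f x ^ (1 + (2 - α) * p)) I)
    (hint3 : MeasureTheory.IntegrableOn (fun v => h v ^ lam) (u '' I))
    (hint4 : MeasureTheory.IntegrableOn (fun x => |x| ^ ((lam - 1) / (2 - α)) * f x) I) :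
    (∫ s in sChange α f '' I, |s| ^ p * g s) ^ (1 / p)
      = ((∫ x in I, f x ^ (1 + (2 - α) * p)) ^ (1 / (1 - (1 + (2 - α) * p)))) ^ (α - 2)
        / |2 - α| ∧
    (∫ v in u '' I, h v ^ lam) ^ (1 / (1 - lam))
      = (|2 - α| *
          (∫ x in I, |x| ^ ((lam - 1) / (2 - α)) * f x) ^ ((2 - α) / (lam - 1)))
        ^ (α - 2)⁻¹ :=
  down_moment_is_entropy_power_general α xi xf hα I hI f g u h hf hmon hg hu hh p lam hp hlam
end

section
/- Let f be a differentiable, strictly decreasing probability density. Then for the transformations with parameter α = 2: (i) σ_p[D_2[f]] = S̄_p[f] = (∫ f(x) |ln f(x)|^p dx)^{1/p}; (ii) N_λ[U_2[f]] = (∫ e^{-(λ-1)x} f(x) dx)^{1/(1-λ)} = (σ^{(E)}_{λ-1}[f])^{-1} for λ ≠ 1; (iii) S[U_2[f]] = ⟨x⟩_f = ∫ x f(x) dx, and consequently S[f] = ⟨s⟩_{D_2[f]}. -/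
open MeasureTheory Real Set Filter Bornology

/-!
For `α = 2` both transformations are changes of variables. Under `s = -log f` one has
`ds = |f'| / f dx`, so `D₂[f](s) ds = f dx`: every moment `∫ F(s) D₂[f](s) ds` of the down
transform equals `∫ f F(-log f) dx`. Under `du = -eˣ f dx` one has `U₂[f](u) = e^{-x}`, so
`∫ F(U₂[f](u)) du = ∫ eˣ f F(e^{-x}) dx`. Taking `F = |·|^p`, `F = id`, `F = (·)^λ` and
`F = t log t` gives the identities.
-/

theorem sChange_two (f : ℝ → ℝ) : sChange 2 f = fun x => -log (f x) := by
  funext x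
  simp [sChange]

theorem upDeriv_two (f : ℝ → ℝ) (x : ℝ) : upDeriv 2 f x = -(exp x * f x) := by
  simp [upDeriv]

theorem upPoint_two (x : ℝ) : upPoint 2 x = exp (-x) := by
  simp [upPoint]

section Monotonicity

variable {I : Set ℝ}

theorem strictAntiOn_of_hasDerivAt_neg (hconv : Convex ℝ I) {φ φ' : ℝ → ℝ}
    (hφ : ∀ x ∈ I, HasDerivAt φ (φ' x) x) (hneg : ∀ x ∈ I, φ' x < 0) :
    StrictAntiOn φ I :=
  strictAntiOn_of_hasDerivWithinAt_neg hconv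
    (fun x hx => (hφ x hx).continuousAt.continuousWithinAt)
    (fun x hx => (hφ x (interior_subset hx)).hasDerivWithinAt)
    (fun x hx => hneg x (interior_subset hx))

theorem IsSmoothDecOn.strictAntiOn {f : ℝ → ℝ} (hmon : IsSmoothDecOn f I)
    (hconv : Convex ℝ I) : StrictAntiOn f I :=
  strictAntiOn_of_hasDerivAt_neg hconv (fun x hx => (hmon.1 x hx).hasDerivAt) hmon.2

theorem strictMonoOn_neg_log_comp {f : ℝ → ℝ} (hpos : ∀ x ∈ I, 0 < f x)
    (hanti : StrictAntiOn f I) : StrictMonoOn (fun x => -log (f x)) I :=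
  fun _ hx _ hy hxy => neg_lt_neg (log_lt_log (hpos _ hy) (hanti hx hy hxy))

end Monotonicity

section ChangeOfVariables

variable {I : Set ℝ} {f : ℝ → ℝ}

theorem setIntegral_image_downTransform_two {g : ℝ → ℝ} (hI : MeasurableSet I)
    (hpos : ∀ x ∈ I, 0 < f x) (hanti : StrictAntiOn f I) (hmon : IsSmoothDecOn f I)
    (hg : IsDownTransform 2 f g I) (F : ℝ → ℝ) :
    ∫ s in sChange 2 f '' I, F s * g s = ∫ x in I, f x * F (-log (f x)) := by
  have hderiv : ∀ x ∈ I, HasDerivWithinAt (sChange 2 f) (-(deriv f x / f x)) I x := by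
    intro x hx
    rw [sChange_two]
    exact ((hmon.1 x hx).hasDerivAt.log (hpos x hx).ne').neg.hasDerivWithinAt
  have hinj : InjOn (sChange 2 f) I := by
    rw [sChange_two]
    exact (strictMonoOn_neg_log_comp hpos hanti).injOn
  rw [integral_image_eq_integral_abs_deriv_smul hI hderiv hinj]
  refine setIntegral_congr_fun hI fun x hx => ?_
  have hf' : |deriv f x| ≠ 0 := abs_ne_zero.mpr (hmon.2 x hx).ne
  have hgx : g (sChange 2 f x) = f x ^ 2 / |deriv f x| := by
    simpa [downAt] using hg x hx
  rw [smul_eq_mul, hgx, sChange_two, abs_neg, abs_div, abs_of_pos (hpos x hx)]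
  field_simp

theorem setIntegral_image_upTransform_two {u h : ℝ → ℝ} (hI : MeasurableSet I)
    (hpos : ∀ x ∈ I, 0 < f x) (hu : ∀ x ∈ I, HasDerivAt u (upDeriv 2 f x) x)
    (hinj : InjOn u I) (hh : ∀ x ∈ I, h (u x) = upPoint 2 x) (F : ℝ → ℝ) :
    ∫ v in u '' I, F (h v) = ∫ x in I, exp x * f x * F (exp (-x)) := by
  rw [integral_image_eq_integral_abs_deriv_smul hI (fun x hx => (hu x hx).hasDerivWithinAt) hinj]
  refine setIntegral_congr_fun hI fun x hx => ?_
  rw [smul_eq_mul, hh x hx, upPoint_two, upDeriv_two, abs_neg,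
    abs_of_pos (mul_pos (exp_pos x) (hpos x hx))]

end ChangeOfVariables

theorem alpha_two_transforms_general
    (xi xf : ℝ) (I : Set ℝ) (hI : I = Set.Ioo xi xf)
    (f g u h : ℝ → ℝ) (p lam : ℝ)
    (hf : IsDensityOn f I) (hmon : IsSmoothDecOn f I)
    (hg : IsDownTransform 2 f g I)
    (hu : ∀ x ∈ I, HasDerivAt u (upDeriv 2 f x) x)
    (hh : ∀ x ∈ I, h (u x) = upPoint 2 x) :
    (∫ s in sChange 2 f '' I, |s| ^ p * g s) ^ (1 / p)
      = (∫ x in I, f x * |Real.log (f x)| ^ p) ^ (1 / p) ∧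
    (∫ v in u '' I, h v ^ lam) ^ (1 / (1 - lam))
      = (∫ x in I, Real.exp (-(lam - 1) * x) * f x) ^ (1 / (1 - lam)) ∧
    (∫ v in u '' I, h v ^ lam) ^ (1 / (1 - lam))
      = ((∫ x in I, Real.exp (-(lam - 1) * x) * f x) ^ (1 / (lam - 1)))⁻¹ ∧
    (-∫ v in u '' I, h v * Real.log (h v)) = (∫ x in I, x * f x) ∧
    (-∫ x in I, f x * Real.log (f x)) = (∫ s in sChange 2 f '' I, s * g s) := by
  subst hI
  have hpos := hf.pos
  have hdown := setIntegral_image_downTransform_two measurableSet_Ioo hpos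
    (hmon.strictAntiOn (convex_Ioo xi xf)) hmon hg
  have hu_anti : StrictAntiOn u (Ioo xi xf) :=
    strictAntiOn_of_hasDerivAt_neg (convex_Ioo xi xf) hu fun x hx => by
      rw [upDeriv_two]; exact neg_neg_of_pos (mul_pos (exp_pos x) (hpos x hx))
  have hup := setIntegral_image_upTransform_two measurableSet_Ioo hpos hu hu_anti.injOn hh
  have hpow :
      ∫ v in u '' Ioo xi xf, h v ^ lam = ∫ x in Ioo xi xf, exp (-(lam - 1) * x) * f x := by
    rw [hup (· ^ lam)]
    refine setIntegral_congr_fun measurableSet_Ioo fun x _ => ?_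
    rw [← exp_mul, mul_right_comm, ← exp_add]
    ring_nf
  refine ⟨?_, by rw [hpow], ?_, ?_, ?_⟩
  · simp_rw [hdown, abs_neg]
  · have hA : 0 ≤ ∫ x in Ioo xi xf, exp (-(lam - 1) * x) * f x :=
      setIntegral_nonneg measurableSet_Ioo fun x hx => mul_nonneg (exp_pos _).le (hpos x hx).le
    rw [hpow, ← neg_sub lam 1, one_div_neg_eq_neg_one_div, rpow_neg hA]
  · rw [hup fun t => t * log t, ← integral_neg]
    refine setIntegral_congr_fun measurableSet_Ioo fun x _ => ?_
    rw [log_exp, exp_neg]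
    field_simp
  · rw [hdown, ← integral_neg]
    simp_rw [mul_neg]

/-- the transformations with parameter `α = 2`:
`σ_p[D₂ f] = S̄_p[f]`, `N_λ[U₂ f] = (σ^{(E)}_{λ-1}[f])⁻¹`, `S[U₂ f] = ⟨x⟩_f`,
and consequently `S[f] = ⟨s⟩_{D₂ f}`. -/
theorem alpha_two_transforms
    (xi xf : ℝ) (I : Set ℝ) (hI : I = Set.Ioo xi xf)
    (f g u h : ℝ → ℝ) (p lam : ℝ) (hp : 0 < p) (hlam : lam ≠ 1)
    (hf : IsDensityOn f I) (hmon : IsSmoothDecOn f I)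
    (hg : IsDownTransform 2 f g I)
    (hu : ∀ x ∈ I, HasDerivAt u (upDeriv 2 f x) x)
    (hh : ∀ x ∈ I, h (u x) = upPoint 2 x)
    (hint1 : MeasureTheory.IntegrableOn (fun s => |s| ^ p * g s) (sChange 2 f '' I))
    (hint2 : MeasureTheory.IntegrableOn (fun x => f x * |Real.log (f x)| ^ p) I)
    (hint3 : MeasureTheory.IntegrableOn (fun v => h v ^ lam) (u '' I))
    (hint4 : MeasureTheory.IntegrableOn (fun x => Real.exp (-(lam - 1) * x) * f x) I)
    (hint5 : MeasureTheory.IntegrableOn (fun v => h v * Real.log (h v)) (u '' I))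
    (hint6 : MeasureTheory.IntegrableOn (fun x => x * f x) I)
    (hint7 : MeasureTheory.IntegrableOn (fun x => f x * Real.log (f x)) I)
    (hint8 : MeasureTheory.IntegrableOn (fun s => s * g s) (sChange 2 f '' I)) :
    (∫ s in sChange 2 f '' I, |s| ^ p * g s) ^ (1 / p)
      = (∫ x in I, f x * |Real.log (f x)| ^ p) ^ (1 / p) ∧
    (∫ v in u '' I, h v ^ lam) ^ (1 / (1 - lam))
      = (∫ x in I, Real.exp (-(lam - 1) * x) * f x) ^ (1 / (1 - lam)) ∧
    (∫ v in u '' I, h v ^ lam) ^ (1 / (1 - lam))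
      = ((∫ x in I, Real.exp (-(lam - 1) * x) * f x) ^ (1 / (lam - 1)))⁻¹ ∧
    (-∫ v in u '' I, h v * Real.log (h v)) = (∫ x in I, x * f x) ∧
    (-∫ x in I, f x * Real.log (f x)) = (∫ s in sChange 2 f '' I, s * g s) :=
  alpha_two_transforms_general xi xf I hI f g u h p lam hf hmon hg hu hh
end

section
/- Let p > 1, λ ≠ 1 with λ > 1 - p*, and α ∈ ℝ \ {2}. Then the down transform of the stretched deformed Gaussian g_{p,λ} (restricted to [0,∞)) is the generalized-Beta-type density D_α[g_{p,λ}](s) = (|1-λ|^{1/p} / (a_{p,λ}^{(λ-1)/p*} p*)) · [(α-2)s]^{(α+λ-2)/(2-α)} · | [(α-2)s]^{(λ-1)/(2-α)} - a_{p,λ}^{λ-1} |^{-1/p}. -/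
open MeasureTheory Real Set Filter Bornology

/-- The Beta function. -/
noncomputable def betaFn (a b : ℝ) : ℝ := Real.Gamma a * Real.Gamma b / Real.Gamma (a + b)

/-- The normalization constant `a_{p,λ}` of the stretched deformed Gaussians. -/
noncomputable def aConst (p lam : ℝ) : ℝ :=
  if lam = 1 then (p / (p - 1)) / (2 * Real.Gamma ((p - 1) / p))
  else (p / (p - 1)) * |1 - lam| ^ ((p - 1) / p) /
    (2 * betaFn ((p - 1) / p) (lam / |1 - lam| + (if lam < 1 then 1 else 0) / p))

/-- The stretched deformed Gaussian `g_{p,λ}` on `ℝ` (symmetric):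
`g_{p,λ}(x) = a_{p,λ} (1+(1-λ)|x|^{p*})₊^{1/(λ-1)}`, `g_{p,1}(x) = a_{p,1} e^{-|x|^{p*}}`. -/
noncomputable def gpl (p lam : ℝ) (x : ℝ) : ℝ :=
  if lam = 1 then aConst p 1 * Real.exp (-|x| ^ (p / (p - 1)))
  else aConst p lam * (max (1 + (1 - lam) * |x| ^ (p / (p - 1))) 0) ^ (lam - 1)⁻¹

/-- The stretched deformed Gaussian `g_{p,λ}` restricted to `[0,∞)`. -/
noncomputable def gplHalf (p lam : ℝ) (x : ℝ) : ℝ :=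
  if lam = 1 then aConst p 1 * Real.exp (-x ^ (p / (p - 1)))
  else aConst p lam * (max (1 + (1 - lam) * x ^ (p / (p - 1))) 0) ^ (lam - 1)⁻¹

/-- The (interior of the) positive part of the support of `g_{p,λ}`. -/
def gplSupp (p lam : ℝ) : Set ℝ := {x | 0 < x ∧ 0 < 1 + (1 - lam) * x ^ (p / (p - 1))}

/-! On its support `g_{p,λ} = a t^{1/(λ-1)}` with `t = 1 + (1-λ) x^{p*}`, so
`g^{λ-1} - a^{λ-1} = a^{λ-1} (1-λ) x^{p*}` recovers `x` from the value of `g`, and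
`(α-2) s = g^{2-α}` recovers `g` from `s`. Substituting both into `g^α / |g'|` expresses the
down transform through `s` alone; what remains is an identity between powers of positive
reals, checked on logarithms. -/

lemma betaFn_pos {a b : ℝ} (ha : 0 < a) (hb : 0 < b) : 0 < betaFn a b := by
  have := Real.Gamma_pos_of_pos ha
  have := Real.Gamma_pos_of_pos hb
  have := Real.Gamma_pos_of_pos (add_pos ha hb)
  unfold betaFn
  positivity

lemma aConst_pos {p lam : ℝ} (hp : 1 < p) (hlam : lam ≠ 1) (hlam2 : 1 - p / (p - 1) < lam) :
    0 < aConst p lam := by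
  have hp1 : 0 < p - 1 := by linarith
  have hL : 0 < |1 - lam| := abs_pos.mpr (sub_ne_zero.mpr hlam.symm)
  have hb : 0 < lam / |1 - lam| + (if lam < 1 then 1 else 0) / p := by
    rcases hlam.lt_or_gt with h | h
    · have hnum : 0 < lam * (p - 1) + 1 := by
        have : 1 - p / (p - 1) = -1 / (p - 1) := by field_simp; ring
        rw [this, div_lt_iff₀ hp1] at hlam2
        linarith
      have heq : lam / |1 - lam| + 1 / p = (lam * (p - 1) + 1) / ((1 - lam) * p) := by
        rw [abs_of_pos (by linarith)]
        field_simp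
        ring
      rw [if_pos h, heq]
      exact div_pos hnum (mul_pos (by linarith) (by linarith))
    · rw [if_neg h.not_gt, zero_div, add_zero]
      exact div_pos (by linarith) hL
  have := betaFn_pos (div_pos hp1 (by linarith : (0 : ℝ) < p)) hb
  rw [aConst, if_neg hlam]
  positivity

lemma mul_sChange_rpow {α : ℝ} (hα : α ≠ 2) {f : ℝ → ℝ} {x : ℝ} (hf : 0 < f x)
    (β : ℝ) :
    ((α - 2) * sChange α f x) ^ (β / (2 - α)) = f x ^ β := by
  have h2α : 2 - α ≠ 0 := sub_ne_zero.mpr (Ne.symm hα)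
  have hs : (α - 2) * sChange α f x = f x ^ (2 - α) := by
    rw [sChange, if_neg hα]
    field_simp [sub_ne_zero.mpr hα]
  rw [hs, ← Real.rpow_mul hf.le, mul_div_cancel₀ β h2α]

lemma gplHalf_eq_of_nonneg {p lam x : ℝ} (hlam : lam ≠ 1)
    (ht : 0 ≤ 1 + (1 - lam) * x ^ (p / (p - 1))) :
    gplHalf p lam x = aConst p lam * (1 + (1 - lam) * x ^ (p / (p - 1))) ^ (lam - 1)⁻¹ := by
  rw [gplHalf, if_neg hlam, max_eq_left ht]

lemma gplHalf_rpow_sub_one {p lam x : ℝ} (hlam : lam ≠ 1) (hx : x ∈ gplSupp p lam)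
    (ha : 0 < aConst p lam) :
    gplHalf p lam x ^ (lam - 1) =
      aConst p lam ^ (lam - 1) * (1 + (1 - lam) * x ^ (p / (p - 1))) := by
  rw [gplHalf_eq_of_nonneg hlam hx.2.le, Real.mul_rpow ha.le (by positivity [hx.2]),
    ← Real.rpow_mul hx.2.le, inv_mul_cancel₀ (sub_ne_zero.mpr hlam), Real.rpow_one]

lemma hasDerivAt_gplHalf {p lam x : ℝ} (hlam : lam ≠ 1) (hx : x ∈ gplSupp p lam) :
    HasDerivAt (gplHalf p lam)
      (-(aConst p lam * (p / (p - 1)) * x ^ (p / (p - 1) - 1) *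
        (1 + (1 - lam) * x ^ (p / (p - 1))) ^ ((lam - 1)⁻¹ - 1))) x := by
  set q := p / (p - 1)
  have hbase : HasDerivAt (fun y : ℝ => 1 + (1 - lam) * y ^ q)
      ((1 - lam) * (q * x ^ (q - 1))) x :=
    ((Real.hasDerivAt_rpow_const (Or.inl hx.1.ne')).const_mul (1 - lam)).const_add 1
  have heq : gplHalf p lam =ᶠ[nhds x]
      fun y => aConst p lam * (1 + (1 - lam) * y ^ q) ^ (lam - 1)⁻¹ := by
    filter_upwards [hbase.continuousAt.eventually (lt_mem_nhds hx.2)] with y hy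
    exact gplHalf_eq_of_nonneg hlam hy.le
  refine ((hbase.rpow_const (Or.inl hx.2.ne')).const_mul _).congr_of_eventuallyEq heq
    |>.congr_deriv ?_
  have : (1 - lam) * (lam - 1)⁻¹ = -1 := by
    field_simp [sub_ne_zero.mpr hlam]
    ring
  linear_combination aConst p lam * q * x ^ (q - 1) *
    (1 + (1 - lam) * x ^ q) ^ ((lam - 1)⁻¹ - 1) * this

lemma downAt_gplHalf {p lam x : ℝ} (α : ℝ) (hp : 1 < p) (hlam : lam ≠ 1)
    (hx : x ∈ gplSupp p lam) (ha : 0 < aConst p lam) :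
    downAt α (gplHalf p lam) x =
      |1 - lam| ^ p⁻¹ / (aConst p lam ^ ((lam - 1) / (p / (p - 1))) * (p / (p - 1))) *
        gplHalf p lam x ^ (α + lam - 2) *
        |gplHalf p lam x ^ (lam - 1) - aConst p lam ^ (lam - 1)| ^ (-p⁻¹) := by
  have hp1 : 0 < p - 1 := by linarith
  have hL : 0 < |1 - lam| := abs_pos.mpr (sub_ne_zero.mpr hlam.symm)
  have hdiff : |gplHalf p lam x ^ (lam - 1) - aConst p lam ^ (lam - 1)| =
      aConst p lam ^ (lam - 1) * (|1 - lam| * x ^ (p / (p - 1))) := by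
    rw [gplHalf_rpow_sub_one hlam hx ha, ← mul_sub_one, add_sub_cancel_left, abs_mul, abs_mul,
      abs_of_pos (Real.rpow_pos_of_pos ha _), abs_of_pos (Real.rpow_pos_of_pos hx.1 _)]
  rw [downAt, (hasDerivAt_gplHalf hlam hx).deriv, abs_neg, abs_of_pos (by positivity [hx.1, hx.2]),
    hdiff, gplHalf_eq_of_nonneg hlam hx.2.le]
  obtain ⟨hx0, ht⟩ := hx
  apply Real.log_injOn_pos (Set.mem_Ioi.mpr (by positivity)) (Set.mem_Ioi.mpr (by positivity))
  simp (disch := positivity) only [Real.log_div, Real.log_mul, Real.log_rpow]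
  field_simp [sub_ne_zero.mpr hlam]
  ring

/-- explicit form (a generalized Beta density) of the down transform of
the stretched deformed Gaussian `g_{p,λ}` restricted to `[0,∞)`. -/
theorem down_of_stretched_gaussian
    (p lam α : ℝ) (hp : 1 < p) (hlam : lam ≠ 1)
    (hlam2 : 1 - p / (p - 1) < lam) (hα : α ≠ 2)
    (g : ℝ → ℝ)
    (hg : IsDownTransform α (gplHalf p lam) g (gplSupp p lam)) :
    ∀ s ∈ sChange α (gplHalf p lam) '' gplSupp p lam,
      g s = |1 - lam| ^ p⁻¹ / (aConst p lam ^ ((lam - 1) / (p / (p - 1))) * (p / (p - 1))) *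
        ((α - 2) * s) ^ ((α + lam - 2) / (2 - α)) *
        |((α - 2) * s) ^ ((lam - 1) / (2 - α)) - aConst p lam ^ (lam - 1)| ^ (-p⁻¹) := by
  rintro s ⟨x, hx, rfl⟩
  have ha : 0 < aConst p lam := aConst_pos hp hlam hlam2
  have hg_pos : 0 < gplHalf p lam x := by
    rw [gplHalf_eq_of_nonneg hlam hx.2.le]
    exact mul_pos ha (Real.rpow_pos_of_pos hx.2 _)
  rw [hg x hx, mul_sChange_rpow hα hg_pos, mul_sChange_rpow hα hg_pos]
  exact downAt_gplHalf α hp hlam hx ha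
end
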